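/- arXiv:2110.10143 — 2 statements merged into one kernel-verified Lean document; each statement's English description precedes it below -/
import Mathlib

section
/- Let G be the threshold graph with creation sequence (0^{k}, 1, 0, 1), where k ≥ 1. Then q(G) = 3. -/
open Matrix BigOperators

/-- The threshold graph on `Fin n` given by a creation sequence `b`:
for `i < j`, vertices `i` and `j` are adjacent iff `b j = true`. -/
def ThresholdGraph {n : ℕ} (b : Fin n → Bool) : SimpleGraph (Fin n) where
  Adj i j := i ≠ j ∧ ((i < j ∧ b j = true) ∨ (j < i ∧ b i = true))
  symm := ⟨fun _ _ h => ⟨h.1.symm, h.2.symm⟩⟩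
  loopless := ⟨fun _ h => h.1 rfl⟩

/-- The threshold graph whose creation sequence is given by a list of booleans. -/
def thresholdOfList (L : List Bool) : SimpleGraph (Fin L.length) where
  Adj i j := i ≠ j ∧ ((i < j ∧ L.get j = true) ∨ (j < i ∧ L.get i = true))
  symm := ⟨fun _ _ h => ⟨h.1.symm, h.2.symm⟩⟩
  loopless := ⟨fun _ h => h.1 rfl⟩

/-- `S(G)`: real symmetric matrices whose off-diagonal nonzero pattern is given by `G`. -/
def SMat {n : ℕ} (G : SimpleGraph (Fin n)) : Set (Matrix (Fin n) (Fin n) ℝ) :=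
  {A | A.IsSymm ∧ ∀ i j : Fin n, i ≠ j → (A i j ≠ 0 ↔ G.Adj i j)}

/-- The number of distinct (real) eigenvalues of a matrix. -/
noncomputable def numEig {n : ℕ} (A : Matrix (Fin n) (Fin n) ℝ) : ℕ :=
  (spectrum ℝ A).ncard

/-- `q(G)`: the minimum number of distinct eigenvalues over matrices in `S(G)`. -/
noncomputable def qGraph {n : ℕ} (G : SimpleGraph (Fin n)) : ℕ :=
  sInf (numEig '' SMat G)

/-!
Lower bound: in `(0^k, 1, 0, 1)` the vertex `k + 1` is adjacent only to the last vertex `k + 2`,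
which is also adjacent to vertex `0`, while `0` and `k + 1` are not adjacent. A real symmetric
matrix `A` with at most two eigenvalues `l, m` satisfies `(A - l)(A - m) = 0`, whose `(0, k + 1)`
entry is `A₀,ₖ₊₂ Aₖ₊₂,ₖ₊₁ ≠ 0`.

Upper bound: if the columns of `Y : ℝ^{n×3}` are orthogonal with squared norms `d`, then
`Y diag(c) Yᵀ` acts as `cᵣ dᵣ` on the `r`-th column and as `0` on their orthogonal complement.
Columns with squared norms `18k, 18k, 50k` and `c = (1, 1, -1)` give the spectrum
`{0, 18k, -50k}`, and a suitable choice of `Y` realises exactly the sign pattern of the graph.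
-/

theorem Set.exists_subset_pair_of_ncard_le_two {α : Type*} [Nonempty α] {s : Set α}
    (hs : s.Finite) (h : s.ncard ≤ 2) : ∃ a b, s ⊆ {a, b} := by
  obtain h0 | h1 | h2 : s.ncard = 0 ∨ s.ncard = 1 ∨ s.ncard = 2 := by omega
  · rw [Set.ncard_eq_zero hs] at h0
    exact ⟨Classical.arbitrary α, Classical.arbitrary α, by simp [h0]⟩
  · obtain ⟨a, rfl⟩ := Set.ncard_eq_one.1 h1
    exact ⟨a, a, by simp⟩
  · obtain ⟨a, b, -, rfl⟩ := Set.ncard_eq_two.1 h2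
    exact ⟨a, b, subset_rfl⟩

theorem IsSelfAdjoint.sub_mul_sub_eq_zero_of_spectrum_subset_pair {A : Type*} [Ring A]
    [StarRing A] [Algebra ℝ A] [TopologicalSpace A]
    [ContinuousFunctionalCalculus ℝ A IsSelfAdjoint] {a : A} (ha : IsSelfAdjoint a) {l m : ℝ}
    (h : spectrum ℝ a ⊆ {l, m}) : (a - algebraMap ℝ A l) * (a - algebraMap ℝ A m) = 0 := by
  have key : cfc (fun x : ℝ => (x - l) * (x - m)) a = 0 := by
    rw [← cfc_zero ℝ a]
    refine cfc_congr fun x hx => ?_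
    rcases h hx with rfl | rfl <;> simp
  rwa [cfc_mul _ _ a, cfc_sub _ _ a, cfc_sub _ _ a, cfc_id' ℝ a, cfc_const l a,
    cfc_const m a] at key

namespace Matrix

variable {n ι K : Type*} [Fintype n] [DecidableEq n] [Fintype ι] [Field K]

theorem IsSymm.three_le_ncard_spectrum {A : Matrix n n ℝ} (hA : A.IsSymm) {i j : n}
    (hij : i ≠ j) (hA₀ : A i j = 0) (hA₂ : (A * A) i j ≠ 0) :
    3 ≤ (spectrum ℝ A).ncard := by
  by_contra! hlt
  obtain ⟨l, m, hlm⟩ := Set.exists_subset_pair_of_ncard_le_two A.finite_spectrum (by omega)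
  have hsa : IsSelfAdjoint A := by
    rw [IsSelfAdjoint, star_eq_conjTranspose, conjTranspose_eq_transpose_of_trivial, hA.eq]
  have h := congrFun₂ (hsa.sub_mul_sub_eq_zero_of_spectrum_subset_pair hlm) i j
  exact hA₂ <| by
    simpa [Algebra.algebraMap_eq_smul_one, sub_mul, mul_sub, one_apply_ne hij, hA₀] using h

theorem mem_spectrum_iff_exists_mulVec_eq_smul (A : Matrix n n K) (μ : K) :
    μ ∈ spectrum K A ↔ ∃ x ≠ 0, A *ᵥ x = μ • x := by
  rw [← spectrum_toLin', ← Module.End.hasEigenvalue_iff_mem_spectrum,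
    Module.End.hasEigenvalue_iff]
  simp [Submodule.ne_bot_iff, and_comm]

theorem zero_mem_spectrum_mul_of_card_lt (M : Matrix n ι K) (N : Matrix ι n K)
    (h : Fintype.card ι < Fintype.card n) : 0 ∈ spectrum K (M * N) := by
  have hker : LinearMap.ker N.mulVecLin ≠ ⊥ :=
    LinearMap.ker_ne_bot_of_finrank_lt (by simpa using h)
  obtain ⟨x, hx, hx0⟩ := (Submodule.ne_bot_iff _).1 hker
  refine (mem_spectrum_iff_exists_mulVec_eq_smul _ _).2 ⟨x, hx0, ?_⟩
  rw [← mulVec_mulVec, show N *ᵥ x = 0 from hx, mulVec_zero, zero_smul]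

variable [DecidableEq ι] {Y : Matrix n ι K} {c d : ι → K}

omit [DecidableEq n] in
theorem transpose_mul_mul_diagonal_mul_transpose (hY : Yᵀ * Y = diagonal d) :
    Yᵀ * (Y * diagonal c * Yᵀ) = diagonal (c * d) * Yᵀ := by
  rw [← Matrix.mul_assoc, ← Matrix.mul_assoc, hY, diagonal_mul_diagonal, mul_comm]
  rfl

omit [DecidableEq n] in
theorem mul_diagonal_mul_transpose_mul (hY : Yᵀ * Y = diagonal d) :
    Y * diagonal c * Yᵀ * Y = Y * diagonal (c * d) := by
  rw [Matrix.mul_assoc, hY, Matrix.mul_assoc, diagonal_mul_diagonal]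
  rfl

theorem spectrum_mul_diagonal_mul_transpose_subset (hY : Yᵀ * Y = diagonal d) :
    spectrum K (Y * diagonal c * Yᵀ) ⊆ insert 0 (Set.range (c * d)) := by
  intro μ hμ
  obtain ⟨x, hx0, hx⟩ := (mem_spectrum_iff_exists_mulVec_eq_smul _ _).1 hμ
  by_contra hμ'
  simp only [Set.mem_insert_iff, Set.mem_range, not_or, not_exists] at hμ'
  have hYx : Yᵀ *ᵥ x = 0 := by
    have h : diagonal (c * d) *ᵥ (Yᵀ *ᵥ x) = μ • (Yᵀ *ᵥ x) := by
      rw [mulVec_mulVec, ← transpose_mul_mul_diagonal_mul_transpose hY, ← mulVec_mulVec, hx,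
        mulVec_smul]
    funext r
    have hr := congrFun h r
    rw [mulVec_diagonal, Pi.smul_apply, smul_eq_mul, ← sub_eq_zero, ← sub_mul] at hr
    exact (mul_eq_zero.1 hr).resolve_left (sub_ne_zero.2 (hμ'.2 r))
  have : μ • x = 0 := by
    rw [← hx, ← mulVec_mulVec, ← mulVec_mulVec, hYx, mulVec_zero, mulVec_zero]
  exact hμ'.1 ((smul_eq_zero.1 this).resolve_right hx0)

theorem mem_spectrum_mul_diagonal_mul_transpose (hY : Yᵀ * Y = diagonal d) {r : ι}
    (hr : d r ≠ 0) : c r * d r ∈ spectrum K (Y * diagonal c * Yᵀ) := by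
  refine (mem_spectrum_iff_exists_mulVec_eq_smul _ _).2
    ⟨Y *ᵥ Pi.single r 1, fun h => hr ?_, ?_⟩
  · have h' : (Yᵀ *ᵥ (Y *ᵥ Pi.single r 1)) r = 0 := by rw [h, mulVec_zero, Pi.zero_apply]
    rwa [mulVec_mulVec, hY, diagonal_mulVec_single, Pi.single_eq_same, mul_one] at h'
  · rw [mulVec_mulVec, mul_diagonal_mul_transpose_mul hY, ← mulVec_mulVec,
      diagonal_mulVec_single, mul_one, Pi.mul_apply, ← mulVec_smul, ← Pi.single_smul',
      smul_eq_mul, mul_one]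

theorem spectrum_mul_diagonal_mul_transpose (hY : Yᵀ * Y = diagonal d) (hd : ∀ r, d r ≠ 0)
    (hcard : Fintype.card ι < Fintype.card n) :
    spectrum K (Y * diagonal c * Yᵀ) = insert 0 (Set.range (c * d)) := by
  refine (spectrum_mul_diagonal_mul_transpose_subset hY).antisymm ?_
  rintro μ (rfl | ⟨r, rfl⟩)
  · rw [Matrix.mul_assoc]
    exact zero_mem_spectrum_mul_of_card_lt _ _ hcard
  · exact mem_spectrum_mul_diagonal_mul_transpose hY (hd r)

end Matrix

theorem three_le_numEig_of_unique_neighbor {n : ℕ} {G : SimpleGraph (Fin n)}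
    {A : Matrix (Fin n) (Fin n) ℝ} (hA : A ∈ SMat G) {i j c : Fin n} (hij : i ≠ j)
    (hnadj : ¬G.Adj i j) (hic : G.Adj i c) (hj : ∀ t, G.Adj t j ↔ t = c) : 3 ≤ numEig A := by
  have hcj : G.Adj c j := (hj c).2 rfl
  have hA₀ : A i j = 0 := not_not.1 fun h => hnadj ((hA.2 i j hij).1 h)
  refine hA.1.three_le_ncard_spectrum hij hA₀ ?_
  rw [mul_apply, Finset.sum_eq_single_of_mem c (Finset.mem_univ c)]
  · exact mul_ne_zero ((hA.2 i c hic.ne).2 hic) ((hA.2 c j hcj.ne).2 hcj)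
  · intro t _ htc
    by_cases htj : t = j
    · rw [htj, hA₀, zero_mul]
    · rw [not_not.1 fun h => htc ((hj t).1 ((hA.2 t j htj).1 h)), mul_zero]

noncomputable def witnessFrame (k : ℕ) : Matrix (Fin (k + 3)) (Fin 3) ℝ :=
  of <| Fin.append (fun _ => ![3, 0, 3])
    ![![√k, 4 * √k, -√k], ![2 * √k, -√k, 2 * √k], ![2 * √k, -√k, -6 * √k]]

noncomputable def witness (k : ℕ) : Matrix (Fin (k + 3)) (Fin (k + 3)) ℝ :=
  witnessFrame k * diagonal (![1, 1, -1] : Fin 3 → ℝ) * (witnessFrame k)ᵀ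

theorem witnessFrame_transpose_mul_self (k : ℕ) :
    (witnessFrame k)ᵀ * witnessFrame k = diagonal ![18 * (k : ℝ), 18 * k, 50 * k] := by
  have hs : √(k : ℝ) * √k = k := Real.mul_self_sqrt k.cast_nonneg
  ext r r'
  rw [mul_apply, Fin.sum_univ_add]
  fin_cases r <;> fin_cases r' <;> simp [witnessFrame, Fin.sum_univ_three] <;> linarith

theorem witness_apply (k : ℕ) (i j : Fin (k + 3)) :
    witness k i j = witnessFrame k i 0 * witnessFrame k j 0
      + witnessFrame k i 1 * witnessFrame k j 1 - witnessFrame k i 2 * witnessFrame k j 2 := by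
  rw [witness, mul_apply, Fin.sum_univ_three]
  simp only [mul_diagonal, transpose_apply, cons_val_zero, cons_val_one, cons_val_two, tail_cons,
    head_cons]
  ring

theorem witness_mem_SMat {k : ℕ} (hk : 1 ≤ k) {G : SimpleGraph (Fin (k + 3))}
    (hG : ∀ i j, G.Adj i j ↔ i ≠ j ∧ (max (i : ℕ) j = k ∨ max (i : ℕ) j = k + 2)) :
    witness k ∈ SMat G := by
  refine ⟨by simp [witness, IsSymm, transpose_mul, Matrix.mul_assoc], fun i j hij => ?_⟩
  have hs : 0 < √(k : ℝ) := Real.sqrt_pos.2 (by exact_mod_cast hk)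
  rw [hG, and_iff_right hij, witness_apply]
  rw [Ne, Fin.ext_iff] at hij
  simp only [witnessFrame, of_apply]
  generalize √(k : ℝ) = s at hs
  revert hij
  -- Each entry is either identically `0` or a nonzero multiple of `s` or `s ^ 2`.
  refine Fin.addCases (fun a => ?_) (fun r => ?_) i <;>
    refine Fin.addCases (fun b => ?_) (fun r' => ?_) j
  all_goals try fin_cases r
  all_goals try fin_cases r'
  all_goals simp
  all_goals
    try intro
    first
    | omega
    | ring1
    | nlinarith
    | exact iff_of_true (fun h => by nlinarith) (by omega)

theorem spectrum_witness {k : ℕ} (hk : 1 ≤ k) :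
    spectrum ℝ (witness k) = {0, 18 * (k : ℝ), -(50 * (k : ℝ))} := by
  have hk' : (0 : ℝ) < k := by exact_mod_cast hk
  rw [witness, spectrum_mul_diagonal_mul_transpose (witnessFrame_transpose_mul_self k)
    (by simp [Fin.forall_fin_succ, hk'.ne']) (by simp; omega)]
  ext x
  simp [Fin.exists_fin_succ, eq_comm]

theorem numEig_witness {k : ℕ} (hk : 1 ≤ k) : numEig (witness k) = 3 := by
  have hk' : (0 : ℝ) < k := by exact_mod_cast hk
  rw [numEig, spectrum_witness hk, Set.ncard_eq_three]
  exact ⟨_, _, _, by positivity, by linarith, by linarith, rfl⟩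

theorem qGraph_eq_three_of_adj_iff {k n : ℕ} (hk : 1 ≤ k) (hn : n = k + 3)
    {G : SimpleGraph (Fin n)}
    (hG : ∀ i j, G.Adj i j ↔ i ≠ j ∧ (max (i : ℕ) j = k ∨ max (i : ℕ) j = k + 2)) :
    qGraph G = 3 := by
  subst hn
  refine IsLeast.csInf_eq ⟨⟨witness k, witness_mem_SMat hk hG, numEig_witness hk⟩, ?_⟩
  rintro _ ⟨A, hA, rfl⟩
  refine three_le_numEig_of_unique_neighbor hA (i := ⟨0, by omega⟩) (j := ⟨k + 1, by omega⟩)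
    (c := ⟨k + 2, by omega⟩) ?_ ?_ ?_ fun t => ?_ <;>
    simp only [hG, ne_eq, Fin.ext_iff] <;> omega

theorem getElem_replicate_false_append_eq_true_iff (k m : ℕ)
    (h : m < (List.replicate k false ++ [true, false, true]).length) :
    (List.replicate k false ++ [true, false, true])[m] = true ↔ m = k ∨ m = k + 2 := by
  rw [List.getElem_append]
  split_ifs with hm
  · simp only [List.length_replicate] at hm
    simp only [List.getElem_replicate, Bool.false_eq_true, false_iff]
    omega
  · simp only [List.length_replicate, List.length_append, List.length_cons,
      List.length_nil] at hm h
    obtain hm | hm | hm : m = k ∨ m = k + 1 ∨ m = k + 2 := by omega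
    all_goals subst hm; simp

/-- For `G ≅ (0^{k}, 1, 0, 1)` with `k ≥ 1`, `q(G) = 3`. -/
theorem stmt6 (k : ℕ) (hk : 1 ≤ k) :
    qGraph (thresholdOfList (List.replicate k false ++ [true, false, true])) = 3 := by
  refine qGraph_eq_three_of_adj_iff hk (by simp) fun i j => ?_
  change i ≠ j ∧ _ ↔ _
  simp only [List.get_eq_getElem, getElem_replicate_false_append_eq_true_iff, ne_eq,
    Fin.ext_iff, Fin.lt_def]
  omega
end

section
/- Let G be the threshold graph with creation sequence (0^{k_1}, 1, 0^{k_2}, 1, 0^{k_3}, 1), where k_1, k_2, k_3 ≥ 1. Then q(G) ≤ 4. -/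
open Matrix BigOperators

/-!
Collapse each of the six runs of the creation sequence (three independent sets of sizes
`k₁, k₂, k₃` and three dominating vertices) to a single index. If `V` is the `n × 6` matrix whose
columns are the normalised indicator vectors of the runs, then `Vᵀ V = 1`, so `A = V M Vᵀ`
satisfies `p(A) = V p(M) Vᵀ` for every polynomial `p` without constant term, and the nonzero
pattern of `A` is that of `M` pulled back along the runs. Taking for `M` a symmetric integer
`6 × 6` matrix with the pattern of the quotient graph that is annihilated by
`(x - 1)(x + 4096)(x + 15625)`, the matrix `A` lies in `S(G)` and is annihilated by
`x (x - 1)(x + 4096)(x + 15625)`, so it has at most four distinct eigenvalues.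
-/

open Polynomial

section Spectrum

variable {𝕜 A : Type*} [Field 𝕜] [Ring A] [Algebra 𝕜 A]

theorem spectrum_subset_rootSet_of_aeval_eq_zero {a : A} {p : 𝕜[X]} (hp : p ≠ 0)
    (hpa : aeval a p = 0) : spectrum 𝕜 a ⊆ p.rootSet 𝕜 := by
  intro μ hμ
  rcases subsingleton_or_nontrivial A with hA | hA
  · simp [spectrum.of_subsingleton] at hμ
  · have hroot := spectrum.subset_polynomial_aeval a p ⟨μ, hμ, rfl⟩
    rw [hpa, spectrum.zero_eq] at hroot
    exact mem_rootSet.mpr ⟨hp, by simpa using hroot⟩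

theorem ncard_spectrum_le_natDegree {a : A} {p : 𝕜[X]} (hp : p ≠ 0) (hpa : aeval a p = 0) :
    (spectrum 𝕜 a).ncard ≤ p.natDegree :=
  (Set.ncard_le_ncard (spectrum_subset_rootSet_of_aeval_eq_zero hp hpa)
    (p.rootSet_finite 𝕜)).trans (p.ncard_rootSet_le 𝕜)

end Spectrum

theorem Matrix.IsSymm.mul_mul_transpose {R m k : Type*} [CommRing R] [Fintype k]
    {B : Matrix k k R} (hB : B.IsSymm) (V : Matrix m k R) : (V * B * Vᵀ).IsSymm := by
  simp only [Matrix.IsSymm, Matrix.transpose_mul, Matrix.transpose_transpose, hB.eq,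
    Matrix.mul_assoc]

section Compression

variable {m k : Type*} [Fintype m] [Fintype k] [DecidableEq m] [DecidableEq k]

theorem Matrix.pow_succ_mul_mul_transpose {R : Type*} [CommRing R] {V : Matrix m k R}
    (hV : Vᵀ * V = 1) (B : Matrix k k R) (n : ℕ) :
    (V * B * Vᵀ) ^ (n + 1) = V * B ^ (n + 1) * Vᵀ := by
  induction n with
  | zero => simp
  | succ n ih =>
    calc (V * B * Vᵀ) ^ (n + 2) = V * B ^ (n + 1) * (Vᵀ * V) * B * Vᵀ := by
          rw [pow_succ, ih]; simp only [Matrix.mul_assoc]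
      _ = V * B ^ (n + 2) * Vᵀ := by
          rw [hV, Matrix.mul_one, pow_succ B (n + 1), Matrix.mul_assoc V]

theorem Matrix.aeval_mul_mul_transpose_X_mul {R : Type*} [CommRing R] {V : Matrix m k R}
    (hV : Vᵀ * V = 1) (B : Matrix k k R) (p : R[X]) :
    aeval (V * B * Vᵀ) (X * p) = V * aeval B (X * p) * Vᵀ := by
  induction p using Polynomial.induction_on' with
  | add p q hp hq => simp only [mul_add, map_add, hp, hq, Matrix.mul_add, Matrix.add_mul]
  | monomial n a =>
    simp only [X_mul_monomial, aeval_monomial, Algebra.algebraMap_eq_smul_one, smul_mul_assoc,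
      one_mul, Matrix.pow_succ_mul_mul_transpose hV, Matrix.mul_smul, Matrix.smul_mul]

theorem Matrix.ncard_spectrum_mul_mul_transpose_le {𝕜 : Type*} [Field 𝕜] {V : Matrix m k 𝕜}
    (hV : Vᵀ * V = 1) {B : Matrix k k 𝕜} {p : 𝕜[X]} (hp : p ≠ 0) (hB : aeval B p = 0) :
    (spectrum 𝕜 (V * B * Vᵀ)).ncard ≤ p.natDegree + 1 := by
  have hXp : aeval (V * B * Vᵀ) (X * p) = 0 := by
    rw [Matrix.aeval_mul_mul_transpose_X_mul hV, map_mul, hB, mul_zero, Matrix.mul_zero,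
      Matrix.zero_mul]
  simpa [natDegree_X_mul hp] using ncard_spectrum_le_natDegree (mul_ne_zero X_ne_zero hp) hXp

end Compression

section FiberIndicator

open Finset

variable {ι κ : Type*} [Fintype ι] [DecidableEq κ]

noncomputable def fiberIndicator (f : ι → κ) : Matrix ι κ ℝ :=
  Matrix.of fun i γ => if f i = γ then (√(#{j | f j = γ} : ℝ))⁻¹ else 0

theorem fiberIndicator_transpose_mul_self [Fintype κ] {f : ι → κ} (hf : f.Surjective) :
    (fiberIndicator f)ᵀ * fiberIndicator f = 1 := by
  ext γ δ
  simp only [Matrix.mul_apply, Matrix.transpose_apply, fiberIndicator, Matrix.of_apply,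
    Matrix.one_apply, mul_ite, ite_mul, zero_mul, mul_zero]
  split_ifs with hγδ
  · subst hγδ
    have hcard : (0 : ℝ) < #{j | f j = γ} := by
      obtain ⟨i, hi⟩ := hf γ
      exact_mod_cast Finset.card_pos.mpr ⟨i, by simp [hi]⟩
    simp only [← ite_and, and_self]
    rw [← Finset.sum_filter, Finset.sum_const, nsmul_eq_mul, ← mul_inv,
      Real.mul_self_sqrt hcard.le, mul_inv_cancel₀ hcard.ne']
  · refine Finset.sum_eq_zero fun i _ => ?_
    split_ifs with h₁ h₂ <;> first | rfl | exact absurd (h₂.symm.trans h₁) hγδ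

theorem fiberIndicator_mul_mul_transpose_apply_ne_zero_iff [Fintype κ] (f : ι → κ)
    (B : Matrix κ κ ℝ) (i j : ι) :
    (fiberIndicator f * B * (fiberIndicator f)ᵀ) i j ≠ 0 ↔ B (f i) (f j) ≠ 0 := by
  have hpos : ∀ i, 0 < (√(#{j | f j = f i} : ℝ))⁻¹ := fun i => by
    refine inv_pos.mpr (Real.sqrt_pos.mpr ?_)
    exact_mod_cast Finset.card_pos.mpr ⟨i, by simp⟩
  simp only [Matrix.mul_apply, Matrix.transpose_apply, fiberIndicator, Matrix.of_apply, ite_mul,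
    zero_mul, mul_ite, mul_zero, Finset.sum_ite_eq, Finset.mem_univ, if_true]
  simp [(hpos i).ne', (hpos j).ne']

end FiberIndicator

-- Rows and columns are indexed by the runs `0^{k₁}, 1, 0^{k₂}, 1, 0^{k₃}, 1` in this order.
def quotientMatrix : Matrix (Fin 6) (Fin 6) ℤ :=
  !![0, 80, 0, 36, 0, 45;
     80, -6399, 0, -2880, 0, -3600;
     0, 0, 0, 80, 0, 36;
     36, -2880, 80, -7695, 0, -4500;
     0, 0, 0, 0, 0, 80;
     45, -3600, 36, -4500, 80, -9720]

theorem quotientMatrix_isSymm : quotientMatrix.IsSymm := by decide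

theorem quotientMatrix_ne_zero_iff :
    ∀ α γ : Fin 6, α < γ ∨ (α = γ ∧ (γ = 0 ∨ γ = 2 ∨ γ = 4)) →
      (quotientMatrix α γ ≠ 0 ↔ γ = 1 ∨ γ = 3 ∨ γ = 5) := by
  intro α γ; fin_cases α <;> fin_cases γ <;> decide

theorem aeval_quotientMatrix_map :
    aeval (quotientMatrix.map (Int.cast : ℤ → ℝ)) ((X - 1) * (X + 4096) * (X + 15625) : ℝ[X]) =
      0 := by
  have h : (quotientMatrix - 1) * (quotientMatrix + 4096) * (quotientMatrix + 15625) = 0 := by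
    decide
  replace h := congrArg (Int.castRingHom ℝ).mapMatrix h
  simp only [map_mul, map_sub, map_add, map_one, map_ofNat, map_zero, RingHom.mapMatrix_apply,
    Int.coe_castRingHom] at h
  simpa only [map_mul, map_sub, map_add, aeval_X, map_one, map_ofNat] using h

/-- The run containing position `m` of a creation sequence whose `1`s sit at positions
`a < b < c`: even indices are the runs of `0`s, odd ones the three dominating vertices. -/
def runIndex (a b c m : ℕ) : Fin 6 :=
  if m < a then 0 else if m = a then 1 else if m < b then 2
  else if m = b then 3 else if m < c then 4 else 5

section RunIndex

variable {a b c : ℕ}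

theorem runIndex_lt_or_eq (hab : a < b) {m m' : ℕ} (h : m < m') (hm' : m' ≤ c) :
    runIndex a b c m < runIndex a b c m' ∨
      (runIndex a b c m = runIndex a b c m' ∧
        (runIndex a b c m' = 0 ∨ runIndex a b c m' = 2 ∨ runIndex a b c m' = 4)) := by
  unfold runIndex; split_ifs <;> simp [Fin.ext_iff, Fin.lt_def] <;> omega

theorem runIndex_odd_iff (hab : a < b) (hbc : b < c) {m : ℕ} (hm : m ≤ c) :
    (runIndex a b c m = 1 ∨ runIndex a b c m = 3 ∨ runIndex a b c m = 5) ↔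
      (m = a ∨ m = b ∨ m = c) := by
  unfold runIndex; split_ifs <;> simp [Fin.ext_iff] <;> omega

theorem runIndex_surjective (ha : 0 < a) (hab : a + 1 < b) (hbc : b + 1 < c) (γ : Fin 6) :
    ∃ m ≤ c, runIndex a b c m = γ := by
  refine ⟨![0, a, a + 1, b, b + 1, c] γ, ?_, ?_⟩ <;> fin_cases γ <;>
    simp only [Fin.reduceFinMk, Matrix.cons_val] <;> try omega
  all_goals unfold runIndex; split_ifs <;> first | rfl | omega

end RunIndex

theorem thresholdOfList_adj_iff_quotientMatrix_ne_zero {L : List Bool} {a b c : ℕ} (hab : a < b)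
    (hbc : b < c) (hlen : L.length = c + 1)
    (hL : ∀ m : Fin L.length, L.get m = true ↔ (m : ℕ) = a ∨ (m : ℕ) = b ∨ (m : ℕ) = c)
    {i j : Fin L.length} (hij : i ≠ j) :
    (thresholdOfList L).Adj i j ↔ quotientMatrix (runIndex a b c i) (runIndex a b c j) ≠ 0 := by
  have key : ∀ i j : Fin L.length, i < j →
      (quotientMatrix (runIndex a b c i) (runIndex a b c j) ≠ 0 ↔ L.get j = true) :=
    fun i j h => (quotientMatrix_ne_zero_iff _ _ (runIndex_lt_or_eq hab h (by omega))).trans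
      ((runIndex_odd_iff hab hbc (by omega)).trans (hL j).symm)
  show i ≠ j ∧ (i < j ∧ L.get j = true ∨ j < i ∧ L.get i = true) ↔ _
  rcases lt_or_gt_of_ne hij with h | h
  · simp [key i j h, hij, h, h.not_gt]
  · rw [quotientMatrix_isSymm.apply (runIndex a b c j) (runIndex a b c i), key j i h]
    simp [hij, h, h.not_gt]

theorem getElem_threeRuns_eq_true_iff (k₁ k₂ k₃ m : ℕ)
    (hm : m < (List.replicate k₁ false ++ [true] ++ List.replicate k₂ false ++ [true] ++
      List.replicate k₃ false ++ [true]).length) :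
    (List.replicate k₁ false ++ [true] ++ List.replicate k₂ false ++ [true] ++
      List.replicate k₃ false ++ [true])[m] = true ↔
      m = k₁ ∨ m = k₁ + k₂ + 1 ∨ m = k₁ + k₂ + k₃ + 2 := by
  simp only [List.getElem_append, List.getElem_replicate, List.getElem_singleton,
    List.length_append, List.length_replicate, List.length_cons, List.length_nil] at hm ⊢
  split_ifs <;> simp_all <;> omega

/-- For `G ≅ (0^{k_1}, 1, 0^{k_2}, 1, 0^{k_3}, 1)` with
`k_1, k_2, k_3 ≥ 1`, `q(G) ≤ 4`. -/
theorem stmt14 (k₁ k₂ k₃ : ℕ) (hk₁ : 1 ≤ k₁) (hk₂ : 1 ≤ k₂) (hk₃ : 1 ≤ k₃) :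
    qGraph (thresholdOfList (List.replicate k₁ false ++ [true] ++
      List.replicate k₂ false ++ [true] ++ List.replicate k₃ false ++ [true])) ≤ 4 := by
  set L := List.replicate k₁ false ++ [true] ++ List.replicate k₂ false ++ [true] ++
    List.replicate k₃ false ++ [true] with hL
  have hlen : L.length = k₁ + k₂ + k₃ + 3 := by
    simp only [hL, List.length_append, List.length_replicate, List.length_singleton]; omega
  let f : Fin L.length → Fin 6 := fun i => runIndex k₁ (k₁ + k₂ + 1) (k₁ + k₂ + k₃ + 2) i
  have hf : f.Surjective := fun γ => by
    obtain ⟨m, hm, hmγ⟩ := runIndex_surjective (a := k₁) (b := k₁ + k₂ + 1)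
      (c := k₁ + k₂ + k₃ + 2) (by omega) (by omega) (by omega) γ
    exact ⟨⟨m, by omega⟩, hmγ⟩
  let A := fiberIndicator f * quotientMatrix.map (Int.cast : ℤ → ℝ) * (fiberIndicator f)ᵀ
  have hA : A ∈ SMat (thresholdOfList L) := by
    refine ⟨(quotientMatrix_isSymm.map _).mul_mul_transpose _, fun i j hij => ?_⟩
    rw [fiberIndicator_mul_mul_transpose_apply_ne_zero_iff, Matrix.map_apply, Int.cast_ne_zero,
      thresholdOfList_adj_iff_quotientMatrix_ne_zero (by omega) (by omega) (by omega)
        (fun m => getElem_threeRuns_eq_true_iff k₁ k₂ k₃ m m.isLt) hij]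
  have hdeg : ((X - 1) * (X + 4096) * (X + 15625) : ℝ[X]).natDegree ≤ 3 := by compute_degree!
  have hA4 : numEig A ≤ 4 :=
    (Matrix.ncard_spectrum_mul_mul_transpose_le (fiberIndicator_transpose_mul_self hf)
      (by monicity! : ((X - 1) * (X + 4096) * (X + 15625) : ℝ[X]).Monic).ne_zero
      aeval_quotientMatrix_map).trans (by omega)
  exact le_trans (Nat.sInf_le ⟨A, hA, rfl⟩) hA4
end
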